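/- arXiv:2503.15088 — 6 statements merged into one kernel-verified Lean document; each statement's English description precedes it below -/
import Mathlib

section
/- Let G be a finite group and ω : G³ → U(1) a function satisfying the 3-cocycle condition ω(g₂,g₃,g₄)·ω(g₁,g₂g₃,g₄)·ω(g₁,g₂,g₃) = ω(g₁g₂,g₃,g₄)·ω(g₁,g₂,g₃g₄) for all g₁,g₂,g₃,g₄ ∈ G. Then the slant product τ(ω), defined by τ(ω)_g(k,l) = ω(g,k,l)·ω(k,l,l⁻¹k⁻¹gkl) / ω(k,k⁻¹gk,l), satisfies the twisted 2-cocycle condition: for all g,k,l,m ∈ G, τ(ω)_{k⁻¹gk}(l,m)·τ(ω)_g(k,lm) = τ(ω)_g(kl,m)·τ(ω)_g(k,l). -/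
/-!
Write `dω` for the coboundary of a 3-cochain `ω` with trivial coefficients. For an arbitrary `ω`,
the twisted coboundary of the slant product `τ(ω)` at `(g, k, l, m)` equals
`dω(k, k⁻¹gk, l, m) · dω(k, l, m, g''') / (dω(g, k, l, m) · dω(k, l, g'', m))`, where `g''` and
`g'''` are the conjugates of `g` by `kl` and `klm`. A 3-cocycle has `dω = 1`, so `τ(ω)` is a
twisted 2-cocycle.
-/

/-- The slant product `τ(ω)_g(k,l) = ω(g,k,l)·ω(k,l,l⁻¹k⁻¹gkl)/ω(k,k⁻¹gk,l)`. -/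
noncomputable def slant {G : Type*} [Group G] (ω : G → G → G → Circle) :
    G → G → G → Circle :=
  fun g k l => ω g k l * ω k l (l⁻¹ * k⁻¹ * g * k * l) / ω k (k⁻¹ * g * k) l

def threeCoboundary {G A : Type*} [Group G] [CommGroup A] (ω : G → G → G → A)
    (g₁ g₂ g₃ g₄ : G) : A :=
  ω g₂ g₃ g₄ * ω g₁ (g₂ * g₃) g₄ * ω g₁ g₂ g₃ / (ω (g₁ * g₂) g₃ g₄ * ω g₁ g₂ (g₃ * g₄))

theorem threeCoboundary_eq_one_iff {G A : Type*} [Group G] [CommGroup A]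
    (ω : G → G → G → A) (g₁ g₂ g₃ g₄ : G) :
    threeCoboundary ω g₁ g₂ g₃ g₄ = 1 ↔
      ω g₂ g₃ g₄ * ω g₁ (g₂ * g₃) g₄ * ω g₁ g₂ g₃ =
        ω (g₁ * g₂) g₃ g₄ * ω g₁ g₂ (g₃ * g₄) :=
  div_eq_one

theorem slant_twistedCoboundary_eq {G : Type*} [Group G] (ω : G → G → G → Circle)
    (g k l m : G) :
    slant ω (k⁻¹ * g * k) l m * slant ω g k (l * m) / (slant ω g (k * l) m * slant ω g k l) =
      threeCoboundary ω k (k⁻¹ * g * k) l m *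
          threeCoboundary ω k l m (m⁻¹ * l⁻¹ * k⁻¹ * g * k * l * m) /
        (threeCoboundary ω g k l m * threeCoboundary ω k l (l⁻¹ * k⁻¹ * g * k * l) m) := by
  rw [← Circle.coe_inj]
  simp only [slant, threeCoboundary, mul_inv_rev, mul_assoc, mul_inv_cancel_left,
    Circle.coe_mul, Circle.coe_div]
  field_simp

theorem slant_isTwistedTwoCocycle_general {G : Type*} [Group G]
    (ω : G → G → G → Circle)
    (hω : ∀ g₁ g₂ g₃ g₄ : G,
      ω g₂ g₃ g₄ * ω g₁ (g₂ * g₃) g₄ * ω g₁ g₂ g₃ =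
        ω (g₁ * g₂) g₃ g₄ * ω g₁ g₂ (g₃ * g₄)) :
    ∀ g k l m : G,
      slant ω (k⁻¹ * g * k) l m * slant ω g k (l * m) =
        slant ω g (k * l) m * slant ω g k l := by
  intro g k l m
  have hdω (g₁ g₂ g₃ g₄ : G) : threeCoboundary ω g₁ g₂ g₃ g₄ = 1 :=
    (threeCoboundary_eq_one_iff ω g₁ g₂ g₃ g₄).mpr (hω g₁ g₂ g₃ g₄)
  have h := slant_twistedCoboundary_eq ω g k l m
  simp only [hdω, mul_one, div_one] at h
  exact div_eq_one.mp h

/-- the slant product of a 3-cocycle is a twisted 2-cocycle. -/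
theorem slant_isTwistedTwoCocycle {G : Type*} [Group G] [Fintype G]
    (ω : G → G → G → Circle)
    (hω : ∀ g₁ g₂ g₃ g₄ : G,
      ω g₂ g₃ g₄ * ω g₁ (g₂ * g₃) g₄ * ω g₁ g₂ g₃ =
        ω (g₁ * g₂) g₃ g₄ * ω g₁ g₂ (g₃ * g₄)) :
    ∀ g k l m : G,
      slant ω (k⁻¹ * g * k) l m * slant ω g k (l * m) =
        slant ω g (k * l) m * slant ω g k l :=
  slant_isTwistedTwoCocycle_general ω hω
end

section
/- Let G be a finite group, and ω a 3-cocycle on G with values in U(1). If ω' = ω·δξ, where (δξ)(g₁,g₂,g₃) = ξ(g₂,g₃)·ξ(g₁,g₂g₃) / (ξ(g₁g₂,g₃)·ξ(g₁,g₂)) for some ξ : G² → U(1), then the slant products τ(ω') and τ(ω) differ by a twisted 2-coboundary: there exists ε : G → U(1)[G] with τ(ω')_g(k,l) / τ(ω)_g(k,l) = ε_{k⁻¹gk}(l)·ε_g(k) / ε_g(kl) for all g,k,l ∈ G. Hence the slant product induces a well-defined map H³(G,U(1)) → H²(G,U(1)[G]). -/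
/-!
Slant product is multiplicative in the cocycle, so `τ(ω') / τ(ω) = τ(δξ)`; expanding `τ(δξ)`,
the twelve values of `ξ` regroup as the twisted coboundary of `ε_g(k) = ξ(k, k⁻¹gk) / ξ(g, k)`.
-/

section

variable {G : Type*} [Group G]

def coboundary {A : Type*} [CommGroup A] (ξ : G → G → A) : G → G → G → A :=
  fun g₁ g₂ g₃ => ξ g₂ g₃ * ξ g₁ (g₂ * g₃) / (ξ (g₁ * g₂) g₃ * ξ g₁ g₂)

noncomputable def slantPrimitive (ξ : G → G → Circle) : G → G → Circle :=
  fun g k => ξ k (k⁻¹ * g * k) / ξ g k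

theorem slant_mul (ω₁ ω₂ : G → G → G → Circle) (g k l : G) :
    slant (ω₁ * ω₂) g k l = slant ω₁ g k l * slant ω₂ g k l := by
  simp only [slant, Pi.mul_apply]
  rw [mul_mul_mul_comm, mul_div_mul_comm]

theorem slant_coboundary (ξ : G → G → Circle) (g k l : G) :
    slant (coboundary ξ) g k l =
      slantPrimitive ξ (k⁻¹ * g * k) l * slantPrimitive ξ g k / slantPrimitive ξ g (k * l) := by
  simp only [slant, coboundary, slantPrimitive, mul_assoc, mul_inv_cancel_left, mul_inv_rev]
  apply Subtype.ext
  push_cast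
  field_simp

end

theorem slant_of_coboundary_general {G : Type*} [Group G]
    (ω : G → G → G → Circle)
    (ξ : G → G → Circle) (ω' : G → G → G → Circle)
    (hω' : ∀ g₁ g₂ g₃ : G,
      ω' g₁ g₂ g₃ =
        ω g₁ g₂ g₃ *
          (ξ g₂ g₃ * ξ g₁ (g₂ * g₃) / (ξ (g₁ * g₂) g₃ * ξ g₁ g₂))) :
    ∃ ε : G → G → Circle,
      ∀ g k l : G,
        slant ω' g k l / slant ω g k l =
          ε (k⁻¹ * g * k) l * ε g k / ε g (k * l) := by
  have hω'_eq : ω' = ω * coboundary ξ := funext₃ hω'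
  refine ⟨slantPrimitive ξ, fun g k l => ?_⟩
  rw [hω'_eq, slant_mul, mul_div_cancel_left, slant_coboundary]

/-- if ω' = ω·δξ then τ(ω') and τ(ω) differ by a twisted 2-coboundary;
hence the slant product induces a well-defined map H³(G,U(1)) → H²(G,U(1)[G]). -/
theorem slant_of_coboundary {G : Type*} [Group G] [Fintype G]
    (ω : G → G → G → Circle)
    (hω : ∀ g₁ g₂ g₃ g₄ : G,
      ω g₂ g₃ g₄ * ω g₁ (g₂ * g₃) g₄ * ω g₁ g₂ g₃ =
        ω (g₁ * g₂) g₃ g₄ * ω g₁ g₂ (g₃ * g₄))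
    (ξ : G → G → Circle) (ω' : G → G → G → Circle)
    (hω' : ∀ g₁ g₂ g₃ : G,
      ω' g₁ g₂ g₃ =
        ω g₁ g₂ g₃ *
          (ξ g₂ g₃ * ξ g₁ (g₂ * g₃) / (ξ (g₁ * g₂) g₃ * ξ g₁ g₂))) :
    ∃ ε : G → G → Circle,
      ∀ g k l : G,
        slant ω' g k l / slant ω g k l =
          ε (k⁻¹ * g * k) l * ε g k / ε g (k * l) :=
  slant_of_coboundary_general ω ξ ω' hω'
end

section
/- Let G be a finite group, let ω : G³ → U(1) be a 3-cocycle, and consider the Hilbert space ℂ[G] with basis {|g⟩ : g ∈ G}. Define for j ∈ {a,...,b} diagonal unitaries via the action on basis vectors |g_a,...,g_b⟩ of ℂ[G]^{⊗(b-a+1)}: U_I^{(h)} |g_a,...,g_b⟩ = (∏_{j=a+1}^{b} ω(h, g_j, g_j⁻¹g_{j-1})) · |hg_a,...,hg_b⟩. Then U_I^{(g)} U_I^{(h)} (U_I^{(gh)})* = Φ_a(g,h) · Φ_b(g,h)*, where Φ_j(g,h) is the diagonal operator acting on the j-th tensor factor by Φ_j(g,h)|g_j⟩ = ω(g,h,h⁻¹g⁻¹g_j)|g_j⟩.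 -/
open Matrix

variable {G : Type*} [Group G] [Fintype G] [DecidableEq G]

/-- The unitary `U_I^{(h)}` on `⊗_{j=0}^{n} ℂ[G]` (sites `a,…,b` re-indexed as
`0,…,n`), acting on basis vectors by
`U_I^{(h)}|g_0,…,g_n⟩ = (∏_{j=1}^{n} ω(h,g_j,g_j⁻¹g_{j-1}))·|hg_0,…,hg_n⟩`. -/
noncomputable def UI (ω : G → G → G → Circle) (n : ℕ) (h : G) :
    Matrix (Fin (n + 1) → G) (Fin (n + 1) → G) ℂ :=
  Matrix.of fun x y =>
    if x = fun j => h * y j then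
      ∏ j : Fin n, (ω h (y j.succ) ((y j.succ)⁻¹ * y j.castSucc) : ℂ)
    else 0

/-- The diagonal fusion operator acting on the leftmost tensor factor:
`Φ_a(g,h)|g_0,…,g_n⟩ = ω(g,h,h⁻¹g⁻¹g_0)|g_0,…,g_n⟩`. -/
noncomputable def PhiLeft (ω : G → G → G → Circle) (n : ℕ) (g h : G) :
    Matrix (Fin (n + 1) → G) (Fin (n + 1) → G) ℂ :=
  Matrix.diagonal fun y => (ω g h (h⁻¹ * g⁻¹ * y 0) : ℂ)

/-- The diagonal fusion operator acting on the rightmost tensor factor: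
`Φ_b(g,h)|g_0,…,g_n⟩ = ω(g,h,h⁻¹g⁻¹g_n)|g_0,…,g_n⟩`. -/
noncomputable def PhiRight (ω : G → G → G → Circle) (n : ℕ) (g h : G) :
    Matrix (Fin (n + 1) → G) (Fin (n + 1) → G) ℂ :=
  Matrix.diagonal fun y => (ω g h (h⁻¹ * g⁻¹ * y (Fin.last n)) : ℂ)

/-!
Each `U_I^{(h)}` is a weighted shift `|y⟩ ↦ c_h(y)|h • y⟩`, so `U_I^{(g)} U_I^{(h)} (U_I^{(gh)})*`
is diagonal, with entry at `y = (gh)⁻¹x` the ratio of phases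
`c_g(h • y) c_h(y) / c_{gh}(y)`. On each bond `(y_{j+1}, y_j)` the cocycle condition at
`(g, h, y_{j+1}, y_{j+1}⁻¹ y_j)` turns the three factors into `ω(g,h,y_j) / ω(g,h,y_{j+1})`,
and the product over the bonds telescopes to `ω(g,h,y_0) / ω(g,h,y_n)`.
-/

theorem Fin.prod_univ_castSucc_div_succ {M : Type*} [CommGroup M] {n : ℕ} (f : Fin (n + 1) → M) :
    ∏ j : Fin n, f j.castSucc / f j.succ = f 0 / f (Fin.last n) := by
  rw [Finset.prod_div_distrib, div_eq_div_iff_mul_eq_mul, ← Fin.prod_univ_castSucc,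
    ← Fin.prod_univ_succ]

section WeightedShift

variable {K ι R : Type*} [Group K] [MulAction K ι] [Fintype ι] [DecidableEq ι]

def weightedShift [Zero R] (k : K) (c : ι → R) : Matrix ι ι R :=
  Matrix.of fun x y => if x = k • y then c y else 0

theorem weightedShift_mul_weightedShift [NonUnitalNonAssocSemiring R] (g h : K) (c d : ι → R) :
    weightedShift g c * weightedShift h d = weightedShift (g * h) fun y => c (h • y) * d y := by
  ext x z
  rw [Matrix.mul_apply, Finset.sum_eq_single (h • z)]
  · simp [weightedShift, mul_smul]
  · intro y _ hy
    simp [weightedShift, hy]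
  · simp

theorem weightedShift_mul_conjTranspose [NonUnitalNonAssocSemiring R] [StarRing R] (k : K)
    (c d : ι → R) :
    weightedShift k c * (weightedShift k d)ᴴ =
      Matrix.diagonal fun x => c (k⁻¹ • x) * star (d (k⁻¹ • x)) := by
  ext x w
  rw [Matrix.mul_apply, Finset.sum_eq_single (k⁻¹ • x)]
  · by_cases hxw : x = w <;> simp [weightedShift, hxw, eq_comm]
  · intro z _ hz
    simp [weightedShift, ← inv_smul_eq_iff, Ne.symm hz]
  · simp

end WeightedShift

section Cocycle

variable {Γ M : Type*} [Group Γ] [CommGroup M]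

def IsThreeCocycle (ω : Γ → Γ → Γ → M) : Prop :=
  ∀ g₁ g₂ g₃ g₄ : Γ,
    ω g₂ g₃ g₄ * ω g₁ (g₂ * g₃) g₄ * ω g₁ g₂ g₃ = ω (g₁ * g₂) g₃ g₄ * ω g₁ g₂ (g₃ * g₄)

theorem IsThreeCocycle.mul_div_eq {ω : Γ → Γ → Γ → M} (hω : IsThreeCocycle ω) (g h p r : Γ) :
    ω g (h * p) r * ω h p r / ω (g * h) p r = ω g h (p * r) / ω g h p := by
  rw [div_eq_div_iff_mul_eq_mul, mul_comm (ω g h (p * r)), ← hω g h p r,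
    mul_comm (ω h p r)]

def uiPhase (ω : Γ → Γ → Γ → M) (n : ℕ) (h : Γ) (y : Fin (n + 1) → Γ) : M :=
  ∏ j : Fin n, ω h (y j.succ) ((y j.succ)⁻¹ * y j.castSucc)

theorem IsThreeCocycle.uiPhase_mul_div {ω : Γ → Γ → Γ → M} (hω : IsThreeCocycle ω) (n : ℕ)
    (g h : Γ) (y : Fin (n + 1) → Γ) :
    uiPhase ω n g (h • y) * uiPhase ω n h y / uiPhase ω n (g * h) y =
      ω g h (y 0) / ω g h (y (Fin.last n)) := by
  have hsite (j : Fin n) :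
      ω g (h * y j.succ) ((h * y j.succ)⁻¹ * (h * y j.castSucc)) *
          ω h (y j.succ) ((y j.succ)⁻¹ * y j.castSucc) /
        ω (g * h) (y j.succ) ((y j.succ)⁻¹ * y j.castSucc) =
      ω g h (y j.castSucc) / ω g h (y j.succ) := by
    have hcancel : (h * y j.succ)⁻¹ * (h * y j.castSucc) = (y j.succ)⁻¹ * y j.castSucc := by
      group
    rw [hcancel, hω.mul_div_eq, mul_inv_cancel_left]
  simp only [uiPhase, Pi.smul_apply, smul_eq_mul, ← Finset.prod_mul_distrib,
    ← Finset.prod_div_distrib, hsite]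
  exact Fin.prod_univ_castSucc_div_succ fun i => ω g h (y i)

end Cocycle

omit [Fintype G] in
theorem UI_eq_weightedShift (ω : G → G → G → Circle) (n : ℕ) (h : G) :
    UI ω n h = weightedShift h fun y => ((uiPhase ω n h y : Circle) : ℂ) := by
  ext x y
  simp only [UI, weightedShift, uiPhase, Matrix.of_apply]
  exact if_congr Iff.rfl (map_prod Circle.coeHom _ _).symm rfl

/-- Lemma on example fusion operators:
`U_I^{(g)} U_I^{(h)} (U_I^{(gh)})* = Φ_a(g,h)·Φ_b(g,h)*`. -/
theorem UI_fusion (ω : G → G → G → Circle)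
    (hω : ∀ g₁ g₂ g₃ g₄ : G,
      ω g₂ g₃ g₄ * ω g₁ (g₂ * g₃) g₄ * ω g₁ g₂ g₃ =
        ω (g₁ * g₂) g₃ g₄ * ω g₁ g₂ (g₃ * g₄))
    (n : ℕ) (g h : G) :
    UI ω n g * UI ω n h * (UI ω n (g * h))ᴴ =
      PhiLeft ω n g h * (PhiRight ω n g h)ᴴ := by
  simp only [UI_eq_weightedShift, weightedShift_mul_weightedShift, weightedShift_mul_conjTranspose,
    PhiLeft, PhiRight, diagonal_conjTranspose, diagonal_mul_diagonal]
  congr 1 with x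
  simp only [Pi.star_apply, ← starRingEnd_apply, ← Circle.coe_inv_eq_conj, ← Circle.coe_mul]
  congr 1
  rw [← div_eq_mul_inv, ← div_eq_mul_inv, IsThreeCocycle.uiPhase_mul_div hω]
  simp only [Pi.smul_apply, smul_eq_mul, _root_.mul_inv_rev]
  rfl
end

section
/- Let G be a finite group, A a unital C*-algebra (or the algebra of n×n matrices), and α_≥ : G → Aut(A) a map with α_≥^{(1)} = id such that for each g,h ∈ G there is a unitary Φ(g,h) ∈ A with α_≥^{(g)} ∘ α_≥^{(h)} = Ad[Φ(g,h)] ∘ α_≥^{(gh)}. Suppose the Φ can be chosen so that Φ(f,g)·Φ(fg,h) = α_≥^{(f)}(Φ(g,h))·Φ(f,gh) for all f,g,h ∈ G. On A ⊗ End(ℂ[G]) define V(g) := Σ_{k∈G} Φ(g,k) ⊗ |k⟩⟨gk|, and set β^{(g)} := Ad[V(g)*] ∘ (α_≥^{(g)} ⊗ id). Then g ↦ β^{(g)} is a group homomorphism G → Aut(A ⊗ End(ℂ[G])). -/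
/-!
Write a matrix over `Fin n × G` as a `G × G` array of `n × n` blocks. Conjugation by
`V(g) = ∑ₖ Φ(g,k) ⊗ |k⟩⟨gk|` moves block `(a, b)` to block `(ga, gb)`, so
`β^{(g)}` acts on blocks by `x ↦ Φ(g,a)* α^{(g)}(x) Φ(g,b)`. Composing two such twisted
conjugations, the pentagon identity `α^{(g)}(Φ(h,c)) Φ(g,hc) = Φ(g,h) Φ(gh,c)` turns the
outer fusion operators into `Φ(g,h) Φ(gh,·)`, and the leftover `Ad[Φ(g,h)]` is exactly the
defect `α^{(g)} ∘ α^{(h)} = Ad[Φ(g,h)] ∘ α^{(gh)}`. For `g = 1` the pentagon forces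
`Φ(1,c) = Φ(1,1)`, which is central because `Ad[Φ(1,1)] = α^{(1)} ∘ α^{(1)} = id`.
-/

open Matrix Kronecker

/-- The extension `φ ⊗ id` of a map `φ` on `n×n` matrices to an operation on
`Matrix (Fin n × G) (Fin n × G) ℂ ≅ A ⊗ End(ℂ[G])`, acting blockwise. -/
noncomputable def tensorExt {n : ℕ} {G : Type*}
    (φ : Matrix (Fin n) (Fin n) ℂ → Matrix (Fin n) (Fin n) ℂ)
    (M : Matrix (Fin n × G) (Fin n × G) ℂ) : Matrix (Fin n × G) (Fin n × G) ℂ :=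
  Matrix.of fun p q => φ (Matrix.of fun i j => M (i, p.2) (j, q.2)) p.1 q.1

namespace Matrix

variable {m G R : Type*}

def gBlock (M : Matrix (m × G) (m × G) R) (p q : G) : Matrix m m R :=
  of fun i j => M (i, p) (j, q)

theorem gBlock_ext {M N : Matrix (m × G) (m × G) R}
    (h : ∀ p q, M.gBlock p q = N.gBlock p q) : M = N := by
  ext ⟨i, p⟩ ⟨j, q⟩
  exact congr_fun₂ (h p q) i j

theorem gBlock_ext_of_equiv (σ : G ≃ G) {M N : Matrix (m × G) (m × G) R}
    (h : ∀ a b, M.gBlock (σ a) (σ b) = N.gBlock (σ a) (σ b)) : M = N :=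
  gBlock_ext fun p q => by simpa only [σ.apply_symm_apply] using h (σ.symm p) (σ.symm q)

theorem gBlock_mul [Fintype m] [Fintype G] [NonUnitalNonAssocSemiring R]
    (M N : Matrix (m × G) (m × G) R) (p q : G) :
    (M * N).gBlock p q = ∑ r, M.gBlock p r * N.gBlock r q := by
  ext i j
  simp only [gBlock, of_apply, mul_apply, Fintype.sum_prod_type, sum_apply]
  exact Finset.sum_comm

theorem gBlock_conjTranspose [Star R] (M : Matrix (m × G) (m × G) R) (p q : G) :
    Mᴴ.gBlock p q = (M.gBlock q p)ᴴ :=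
  rfl

theorem gBlock_tensorExt {n : ℕ} (φ : Matrix (Fin n) (Fin n) ℂ → Matrix (Fin n) (Fin n) ℂ)
    (M : Matrix (Fin n × G) (Fin n × G) ℂ) (p q : G) :
    (tensorExt φ M).gBlock p q = φ (M.gBlock p q) :=
  rfl

theorem gBlock_sum_kronecker_single [Fintype G] [DecidableEq G] [Semiring R]
    (A : G → Matrix m m R) (σ : G → G) (p q : G) :
    (∑ k, A k ⊗ₖ single k (σ k) (1 : R)).gBlock p q = if σ p = q then A p else 0 := by
  ext i j
  simp only [gBlock, of_apply, sum_apply, kroneckerMap_apply, single_apply, mul_ite, mul_one,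
    mul_zero, ite_and, Finset.sum_ite_eq', Finset.mem_univ, if_true]
  split_ifs <;> simp

theorem gBlock_conjTranspose_mul_mul_of_eq_sum_kronecker_single [Fintype m] [Fintype G]
    [DecidableEq G] [CommSemiring R] [StarRing R] (A : G → Matrix m m R) (σ : G ≃ G)
    {V : Matrix (m × G) (m × G) R} (hV : V = ∑ k, A k ⊗ₖ single k (σ k) (1 : R))
    (X : Matrix (m × G) (m × G) R) (a b : G) :
    (Vᴴ * X * V).gBlock (σ a) (σ b) = (A a)ᴴ * X.gBlock a b * A b := by
  simp only [gBlock_mul, gBlock_conjTranspose, hV, gBlock_sum_kronecker_single,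
    σ.apply_eq_iff_eq, apply_ite conjTranspose, conjTranspose_zero, ite_mul, mul_ite, zero_mul,
    mul_zero, Finset.sum_ite_eq', Finset.mem_univ, if_true]

end Matrix

theorem star_mul_conj_mul_of_mem_unitary {A : Type*} [Monoid A] [StarMul A] {u : A}
    (hu : u ∈ unitary A) (y : A) : star u * (u * y * star u) * u = y := by
  simp only [← mul_assoc, Unitary.star_mul_self_of_mem hu, one_mul]
  simp only [mul_assoc, Unitary.star_mul_self_of_mem hu, mul_one]

section TwistedConj

variable {G R A : Type*} [Group G] [Semiring A] [StarRing A] [SMul R A]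

def twistedConj (α : G → A ≃⋆ₐ[R] A) (Φ : G → G → A) (g a b : G) (x : A) : A :=
  star (Φ g a) * α g x * Φ g b

variable {α : G → A ≃⋆ₐ[R] A} {Φ : G → G → A}

theorem twistedConj_twistedConj (hΦu : ∀ g h, Φ g h ∈ unitary A)
    (hAd : ∀ g h x, α g (α h x) = Φ g h * α (g * h) x * star (Φ g h))
    (hPent : ∀ f g h, Φ f g * Φ (f * g) h = α f (Φ g h) * Φ f (g * h))
    (g h a b : G) (x : A) :
    twistedConj α Φ g (h * a) (h * b) (twistedConj α Φ h a b x) =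
      twistedConj α Φ (g * h) a b x := by
  unfold twistedConj
  calc star (Φ g (h * a)) * α g (star (Φ h a) * α h x * Φ h b) * Φ g (h * b)
      = star (α g (Φ h a) * Φ g (h * a)) * α g (α h x) * (α g (Φ h b) * Φ g (h * b)) := by
        simp only [map_mul, map_star, star_mul, mul_assoc]
    _ = star (Φ g h * Φ (g * h) a) * (Φ g h * α (g * h) x * star (Φ g h)) *
          (Φ g h * Φ (g * h) b) := by
        rw [hPent, hPent, hAd]
    _ = star (Φ (g * h) a) *
          (star (Φ g h) * (Φ g h * α (g * h) x * star (Φ g h)) * Φ g h) * Φ (g * h) b := by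
        simp only [star_mul, mul_assoc]
    _ = star (Φ (g * h) a) * α (g * h) x * Φ (g * h) b := by
        rw [star_mul_conj_mul_of_mem_unitary (hΦu g h)]

theorem fusion_one_left_eq_of_pentagon (hα1 : ∀ x, α 1 x = x)
    (hΦu : ∀ g h, Φ g h ∈ unitary A)
    (hPent : ∀ f g h, Φ f g * Φ (f * g) h = α f (Φ g h) * Φ f (g * h)) (c : G) :
    Φ 1 c = Φ 1 1 := by
  have h := congr_arg (· * star (Φ 1 c)) (hPent 1 1 c)
  simpa only [one_mul, hα1, mul_assoc, Unitary.mul_star_self_of_mem (hΦu 1 c), mul_one]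
    using h.symm

theorem twistedConj_one (hα1 : ∀ x, α 1 x = x) (hΦu : ∀ g h, Φ g h ∈ unitary A)
    (hAd : ∀ g h x, α g (α h x) = Φ g h * α (g * h) x * star (Φ g h))
    (hPent : ∀ f g h, Φ f g * Φ (f * g) h = α f (Φ g h) * Φ f (g * h))
    (a b : G) (x : A) :
    twistedConj α Φ 1 a b x = x := by
  have hx : x = Φ 1 1 * x * star (Φ 1 1) := by simpa only [hα1, one_mul] using hAd 1 1 x
  rw [twistedConj, fusion_one_left_eq_of_pentagon hα1 hΦu hPent a,
    fusion_one_left_eq_of_pentagon hα1 hΦu hPent b, hα1]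
  conv_lhs => rw [hx]
  exact star_mul_conj_mul_of_mem_unitary (hΦu 1 1) x

end TwistedConj

/-- given `α_≥ : G → Aut(A)` with `α_≥^{(1)} = id` and unitary
fusion operators `Φ(g,h)` satisfying `α_≥^{(g)}∘α_≥^{(h)} = Ad[Φ(g,h)]∘α_≥^{(gh)}`
and the phase-free pentagon `Φ(f,g)Φ(fg,h) = α_≥^{(f)}(Φ(g,h))Φ(f,gh)`, the
modified restriction `β^{(g)} = Ad[V(g)*]∘(α_≥^{(g)} ⊗ id)`, with
`V(g) = Σ_k Φ(g,k) ⊗ |k⟩⟨gk|`, is a group homomorphism. -/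
theorem decoupled_right_restriction {G : Type*} [Group G] [Fintype G] [DecidableEq G]
    (n : ℕ)
    (α : G → (Matrix (Fin n) (Fin n) ℂ ≃⋆ₐ[ℂ] Matrix (Fin n) (Fin n) ℂ))
    (hα1 : ∀ M, α 1 M = M)
    (Φ : G → G → Matrix (Fin n) (Fin n) ℂ)
    (hΦu : ∀ g h, Φ g h ∈ Matrix.unitaryGroup (Fin n) ℂ)
    (hAd : ∀ g h : G, ∀ M : Matrix (Fin n) (Fin n) ℂ,
      α g (α h M) = Φ g h * α (g * h) M * (Φ g h)ᴴ)
    (hPent : ∀ f g h : G,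
      Φ f g * Φ (f * g) h = α f (Φ g h) * Φ f (g * h))
    (V : G → Matrix (Fin n × G) (Fin n × G) ℂ)
    (hV : ∀ g : G,
      V g = ∑ k : G, (Φ g k) ⊗ₖ Matrix.single k (g * k) (1 : ℂ))
    (β : G → Matrix (Fin n × G) (Fin n × G) ℂ → Matrix (Fin n × G) (Fin n × G) ℂ)
    (hβ : ∀ g M, β g M = (V g)ᴴ * tensorExt (⇑(α g)) M * V g) :
    (∀ g h : G, ∀ M, β g (β h M) = β (g * h) M) ∧ (∀ M, β 1 M = M) := by
  have hβ_gBlock : ∀ g M a b,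
      (β g M).gBlock (g * a) (g * b) = twistedConj α Φ g a b (M.gBlock a b) := fun g M a b => by
    rw [hβ, twistedConj, ← gBlock_tensorExt (α g)]
    exact gBlock_conjTranspose_mul_mul_of_eq_sum_kronecker_single (Φ g) (Equiv.mulLeft g)
      (hV g) _ a b
  refine ⟨fun g h M => gBlock_ext_of_equiv (Equiv.mulLeft (g * h)) fun a b => ?_,
    fun M => gBlock_ext_of_equiv (Equiv.mulLeft 1) fun a b => ?_⟩
  · dsimp only [Equiv.coe_mulLeft]
    rw [hβ_gBlock (g * h), mul_assoc g h a, mul_assoc g h b, hβ_gBlock, hβ_gBlock]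
    exact twistedConj_twistedConj hΦu hAd hPent g h a b _
  · dsimp only [Equiv.coe_mulLeft]
    rw [hβ_gBlock, one_mul, one_mul]
    exact twistedConj_one hα1 hΦu hAd hPent a b _
end

section
/- Let G be a finite group, A a unital C*-algebra (or matrix algebra), α : G → Aut(A) a group homomorphism, and α_≥ : G → Aut(A) a second family with α_≥^{(1)} = id. Suppose for each g,k there are unitaries X_g(k) ∈ A with α^{(k)} ∘ α_≥^{(k⁻¹gk)} ∘ α^{(k⁻¹)} ∘ (α_≥^{(g)})⁻¹ = Ad[X_g(k)], chosen so that α^{(k)}(X_{k⁻¹gk}(l))·X_g(k) = X_g(kl) for all g,k,l ∈ G. On A ⊗ End(ℂ[G]) define V_g := Σ_k X_g(k) ⊗ |k⟩⟨k| and set β_≥^{(g)} := Ad[V_g] ∘ (α_≥^{(g)} ⊗ id), and let α̃^{(k)} := α^{(k)} ⊗ Ad[L^{(k)}] where L^{(k)}|l⟩ = |kl⟩. Then β_≥ is covariant: α̃^{(k)} ∘ β_≥^{(k⁻¹gk)} ∘ α̃^{(k⁻¹)} = β_≥^{(g)} for all g,k ∈ G. -/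
/-!
All maps involved act blockwise on `Matrix (Fin n × G) (Fin n × G) ℂ`, blocks indexed by
`G × G`: the `(x, y)` block of `β_≥^{(g)} M` is `X_g(x) α_≥^{(g)}(M_{xy}) X_g(y)*`, and
`α̃^{(k)}` moves the block at `(k⁻¹x, k⁻¹y)` to `(x, y)` while applying `α^{(k)}`. The cocycle
relation at `l = k⁻¹x` and unitarity give `α^{(k)}(X_{k⁻¹gk}(k⁻¹x)) = X_g(x) X_g(k)*`, the
defining property of `X_g(k)` gives
`α^{(k)} α_≥^{(k⁻¹gk)} α^{(k⁻¹)}(N) = X_g(k) α_≥^{(g)}(N) X_g(k)*`, and the inner factors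
`X_g(k)* X_g(k)` cancel.
-/

open Matrix Kronecker

/-- The left regular representation matrix `L^{(k)}|l⟩ = |kl⟩` on `ℂ[G]`. -/
def Lreg {G : Type*} [Group G] [DecidableEq G] (k : G) : Matrix G G ℂ :=
  Matrix.of fun x y => if x = k * y then (1 : ℂ) else 0

theorem Lreg_apply {G : Type*} [Group G] [DecidableEq G] (k x y : G) :
    Lreg k x y = if y = k⁻¹ * x then 1 else 0 := by
  simp only [Lreg, of_apply, eq_inv_mul_iff_mul_eq, eq_comm]

section CrossingOperators

variable {R A G : Type*} [CommSemiring R] [Semiring A] [StarRing A] [Algebra R A] [Group G]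
  (α αg : G → A ≃⋆ₐ[R] A) (X : G → G → A)

theorem apply_crossing_eq_of_cocycle (hXu : ∀ g k, X g k ∈ unitary A)
    (hXc : ∀ g k l : G, α k (X (k⁻¹ * g * k) l) * X g k = X g (k * l)) (g k x : G) :
    α k (X (k⁻¹ * g * k) (k⁻¹ * x)) = X g x * star (X g k) := by
  have h := hXc g k (k⁻¹ * x)
  rw [mul_inv_cancel_left] at h
  rw [← h, mul_assoc (α k _), Unitary.mul_star_self_of_mem (hXu g k), mul_one]

theorem apply_conj_crossing_eq_of_cocycle (hXu : ∀ g k, X g k ∈ unitary A)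
    (hX : ∀ g k : G, ∀ M : A,
      α k (αg (k⁻¹ * g * k) (α k⁻¹ ((αg g).symm M))) = X g k * M * star (X g k))
    (hXc : ∀ g k l : G, α k (X (k⁻¹ * g * k) l) * X g k = X g (k * l)) (g k x y : G) (N : A) :
    α k (X (k⁻¹ * g * k) (k⁻¹ * x) * αg (k⁻¹ * g * k) (α k⁻¹ N) *
        star (X (k⁻¹ * g * k) (k⁻¹ * y)))
      = X g x * αg g N * star (X g y) := by
  have hconj : α k (αg (k⁻¹ * g * k) (α k⁻¹ N)) = X g k * αg g N * star (X g k) := by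
    simpa using hX g k (αg g N)
  have hunit : star (X g k) * X g k = 1 := Unitary.star_mul_self_of_mem (hXu g k)
  rw [map_mul, map_mul, map_star, apply_crossing_eq_of_cocycle α X hXu hXc,
    apply_crossing_eq_of_cocycle α X hXu hXc, hconj, star_mul, star_star]
  calc X g x * star (X g k) * (X g k * αg g N * star (X g k)) * (X g k * star (X g y))
      = X g x * (star (X g k) * X g k) * αg g N * (star (X g k) * X g k) * star (X g y) := by
        simp only [mul_assoc]
    _ = X g x * αg g N * star (X g y) := by rw [hunit, mul_one, mul_one]

end CrossingOperators

namespace Matrix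

variable {m G R : Type*}

def block (M : Matrix (m × G) (m × G) R) (x y : G) : Matrix m m R :=
  of fun i j => M (i, x) (j, y)

theorem ext_block {M N : Matrix (m × G) (m × G) R} (h : ∀ x y, M.block x y = N.block x y) :
    M = N := by
  ext ⟨i, x⟩ ⟨j, y⟩
  exact congrFun₂ (h x y) i j

theorem block_tensorExt {n : ℕ} (φ : Matrix (Fin n) (Fin n) ℂ → Matrix (Fin n) (Fin n) ℂ)
    (M : Matrix (Fin n × G) (Fin n × G) ℂ) (x y : G) :
    (tensorExt φ M).block x y = φ (M.block x y) :=
  rfl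

theorem block_conj_one_kronecker_Lreg [Fintype m] [DecidableEq m] [Group G] [Fintype G]
    [DecidableEq G] (k : G) (M : Matrix (m × G) (m × G) ℂ) (x y : G) :
    ((1 ⊗ₖ Lreg k) * M * (1 ⊗ₖ Lreg k)ᴴ).block x y = M.block (k⁻¹ * x) (k⁻¹ * y) := by
  ext i j
  simp [block, Lreg_apply, mul_apply, conjTranspose_apply, one_apply, Fintype.sum_prod_type,
    ite_mul, apply_ite]

theorem sum_kronecker_single_eq_blockDiagonal [Fintype G] [DecidableEq G] [Semiring R]
    (Y : G → Matrix m m R) : ∑ c : G, Y c ⊗ₖ single c c (1 : R) = blockDiagonal Y := by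
  ext ⟨i, x⟩ ⟨j, y⟩
  simp [blockDiagonal_apply, sum_apply, single, ite_and]

theorem block_blockDiagonal_mul_mul_conjTranspose [Fintype m] [Fintype G] [DecidableEq G]
    [Semiring R] [StarRing R] (Y : G → Matrix m m R) (M : Matrix (m × G) (m × G) R) (x y : G) :
    (blockDiagonal Y * M * (blockDiagonal Y)ᴴ).block x y = Y x * M.block x y * (Y y)ᴴ := by
  ext i j
  simp [block, mul_apply, conjTranspose_apply, blockDiagonal_apply, Fintype.sum_prod_type,
    ite_mul, mul_ite]

end Matrix

theorem covariant_right_restriction_general {G : Type*} [Group G] [Fintype G] [DecidableEq G]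
    (n : ℕ)
    (α : G → (Matrix (Fin n) (Fin n) ℂ ≃⋆ₐ[ℂ] Matrix (Fin n) (Fin n) ℂ))
    (αg : G → (Matrix (Fin n) (Fin n) ℂ ≃⋆ₐ[ℂ] Matrix (Fin n) (Fin n) ℂ))
    (X : G → G → Matrix (Fin n) (Fin n) ℂ)
    (hXu : ∀ g k, X g k ∈ Matrix.unitaryGroup (Fin n) ℂ)
    (hX : ∀ g k : G, ∀ M : Matrix (Fin n) (Fin n) ℂ,
      α k (αg (k⁻¹ * g * k) (α k⁻¹ ((αg g).symm M))) = X g k * M * (X g k)ᴴ)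
    (hXc : ∀ g k l : G, α k (X (k⁻¹ * g * k) l) * X g k = X g (k * l))
    (V : G → Matrix (Fin n × G) (Fin n × G) ℂ)
    (hV : ∀ g : G, V g = ∑ k : G, (X g k) ⊗ₖ Matrix.single k k (1 : ℂ))
    (βg : G → Matrix (Fin n × G) (Fin n × G) ℂ → Matrix (Fin n × G) (Fin n × G) ℂ)
    (hβg : ∀ g M, βg g M = V g * tensorExt (⇑(αg g)) M * (V g)ᴴ)
    (αt : G → Matrix (Fin n × G) (Fin n × G) ℂ → Matrix (Fin n × G) (Fin n × G) ℂ)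
    (hαt : ∀ k M,
      αt k M = ((1 : Matrix (Fin n) (Fin n) ℂ) ⊗ₖ Lreg k) * tensorExt (⇑(α k)) M *
        ((1 : Matrix (Fin n) (Fin n) ℂ) ⊗ₖ Lreg k)ᴴ) :
    ∀ g k : G, ∀ M, αt k (βg (k⁻¹ * g * k) (αt k⁻¹ M)) = βg g M := by
  intro g k M
  refine ext_block fun x y => ?_
  simp only [hαt, hβg, hV, sum_kronecker_single_eq_blockDiagonal, block_conj_one_kronecker_Lreg,
    block_blockDiagonal_mul_mul_conjTranspose, block_tensorExt, inv_inv, mul_inv_cancel_left]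
  exact apply_conj_crossing_eq_of_cocycle α αg X hXu hX hXc g k x y (M.block x y)

/-- if the crossing operators `X_g(k)` of a right restriction
`α_≥` of a symmetry `α` satisfy the exact twisted cocycle relation
`α^{(k)}(X_{k⁻¹gk}(l))·X_g(k) = X_g(kl)`, then the modified right restriction
`β_≥^{(g)} = Ad[V_g]∘(α_≥^{(g)} ⊗ id)` with `V_g = Σ_k X_g(k) ⊗ |k⟩⟨k|` is
covariant for the stacked symmetry `α̃^{(k)} = α^{(k)} ⊗ Ad[L^{(k)}]`. -/
theorem covariant_right_restriction {G : Type*} [Group G] [Fintype G] [DecidableEq G]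
    (n : ℕ)
    (α : G → (Matrix (Fin n) (Fin n) ℂ ≃⋆ₐ[ℂ] Matrix (Fin n) (Fin n) ℂ))
    (hα : ∀ k l : G, ∀ M, α k (α l M) = α (k * l) M)
    (hα1 : ∀ M, α 1 M = M)
    (αg : G → (Matrix (Fin n) (Fin n) ℂ ≃⋆ₐ[ℂ] Matrix (Fin n) (Fin n) ℂ))
    (hαg1 : ∀ M, αg 1 M = M)
    (X : G → G → Matrix (Fin n) (Fin n) ℂ)
    (hXu : ∀ g k, X g k ∈ Matrix.unitaryGroup (Fin n) ℂ)
    (hX : ∀ g k : G, ∀ M : Matrix (Fin n) (Fin n) ℂ,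
      α k (αg (k⁻¹ * g * k) (α k⁻¹ ((αg g).symm M))) = X g k * M * (X g k)ᴴ)
    (hXc : ∀ g k l : G, α k (X (k⁻¹ * g * k) l) * X g k = X g (k * l))
    (V : G → Matrix (Fin n × G) (Fin n × G) ℂ)
    (hV : ∀ g : G, V g = ∑ k : G, (X g k) ⊗ₖ Matrix.single k k (1 : ℂ))
    (βg : G → Matrix (Fin n × G) (Fin n × G) ℂ → Matrix (Fin n × G) (Fin n × G) ℂ)
    (hβg : ∀ g M, βg g M = V g * tensorExt (⇑(αg g)) M * (V g)ᴴ)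
    (αt : G → Matrix (Fin n × G) (Fin n × G) ℂ → Matrix (Fin n × G) (Fin n × G) ℂ)
    (hαt : ∀ k M,
      αt k M = ((1 : Matrix (Fin n) (Fin n) ℂ) ⊗ₖ Lreg k) * tensorExt (⇑(α k)) M *
        ((1 : Matrix (Fin n) (Fin n) ℂ) ⊗ₖ Lreg k)ᴴ) :
    ∀ g k : G, ∀ M, αt k (βg (k⁻¹ * g * k) (αt k⁻¹ M)) = βg g M :=
  covariant_right_restriction_general n α αg X hXu hX hXc V hV βg hβg αt hαt
end

section
/- Let G be a finite group, ω : G³ → U(1) a 3-cocycle normalized so that ω(1,g,h) = ω(g,1,h) = ω(g,h,1) = 1. For j ∈ ℤ define phases on pairs (g_j, g_{j+1}) ∈ G² by v^{(g)}(g_j,g_{j+1}) = ω(g, g_{j+1}, g_{j+1}⁻¹ g_j). Then for any finite sequence g_a,...,g_b ∈ G and any g,h ∈ G: ∏_{j=a+1}^{b} [ω(h,g_j,g_j⁻¹g_{j-1})·ω(g,hg_j,g_j⁻¹g_{j-1})/ω(gh,g_j,g_j⁻¹g_{j-1})] = ω(g,h,g_a)/ω(g,h,g_b). -/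
/-!
Taking `(g₁, g₂, g₃, g₄) = (g, h, g_j, g_j⁻¹ g_{j-1})` in the cocycle relation turns the `j`-th
factor into `ω(g, h, g_{j-1}) / ω(g, h, g_j)`, so the product telescopes.
-/

open Finset

theorem Int.prod_Ioc_sub_one_div {M : Type*} [CommGroup M] (f : ℤ → M) {a b : ℤ}
    (hab : a ≤ b) : ∏ j ∈ Ioc a b, f (j - 1) / f j = f a / f b := by
  induction b, hab using Int.leInduction with
  | base => simp
  | succ b hab ih =>
    rw [← insert_Ioc_right_eq_Ioc_add_one hab, prod_insert (by simp), ih, add_sub_cancel_right,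
      div_mul_div_cancel']

theorem three_cocycle_mul_div_eq_div {G M : Type*} [Group G] [CommGroup M]
    (ω : G → G → G → M)
    (hω : ∀ g₁ g₂ g₃ g₄ : G,
      ω g₂ g₃ g₄ * ω g₁ (g₂ * g₃) g₄ * ω g₁ g₂ g₃ =
        ω (g₁ * g₂) g₃ g₄ * ω g₁ g₂ (g₃ * g₄))
    (g h x y : G) :
    ω h x (x⁻¹ * y) * ω g (h * x) (x⁻¹ * y) / ω (g * h) x (x⁻¹ * y) = ω g h y / ω g h x := by
  rw [div_eq_div_iff_mul_eq_mul, hω, mul_inv_cancel_left, mul_comm]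

theorem telescoping_cocycle_product_general {G : Type*} [Group G]
    (ω : G → G → G → Circle)
    (hω : ∀ g₁ g₂ g₃ g₄ : G,
      ω g₂ g₃ g₄ * ω g₁ (g₂ * g₃) g₄ * ω g₁ g₂ g₃ =
        ω (g₁ * g₂) g₃ g₄ * ω g₁ g₂ (g₃ * g₄))
    (a b : ℤ) (hab : a ≤ b) (gseq : ℤ → G) (g h : G) :
    (∏ j ∈ Finset.Icc (a + 1) b,
        (ω h (gseq j) ((gseq j)⁻¹ * gseq (j - 1)) *
            ω g (h * gseq j) ((gseq j)⁻¹ * gseq (j - 1)) /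
          ω (g * h) (gseq j) ((gseq j)⁻¹ * gseq (j - 1)))) =
      ω g h (gseq a) / ω g h (gseq b) := by
  simp only [three_cocycle_mul_div_eq_div ω hω, Icc_add_one_left_eq_Ioc]
  exact Int.prod_Ioc_sub_one_div (fun j ↦ ω g h (gseq j)) hab

open Finset in
/-- the telescoping product identity at the computational core of
the example symmetry: for a normalized 3-cocycle `ω` and any finite sequence
`g_a, …, g_b` in `G`,
`∏_{j=a+1}^{b} ω(h,g_j,g_j⁻¹g_{j-1})·ω(g,hg_j,g_j⁻¹g_{j-1})/ω(gh,g_j,g_j⁻¹g_{j-1})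
  = ω(g,h,g_a)/ω(g,h,g_b)`. -/
theorem telescoping_cocycle_product {G : Type*} [Group G] [Fintype G]
    (ω : G → G → G → Circle)
    (hω : ∀ g₁ g₂ g₃ g₄ : G,
      ω g₂ g₃ g₄ * ω g₁ (g₂ * g₃) g₄ * ω g₁ g₂ g₃ =
        ω (g₁ * g₂) g₃ g₄ * ω g₁ g₂ (g₃ * g₄))
    (hnorm₁ : ∀ g h : G, ω 1 g h = 1)
    (hnorm₂ : ∀ g h : G, ω g 1 h = 1)
    (hnorm₃ : ∀ g h : G, ω g h 1 = 1)
    (a b : ℤ) (hab : a ≤ b) (gseq : ℤ → G) (g h : G) :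
    (∏ j ∈ Finset.Icc (a + 1) b,
        (ω h (gseq j) ((gseq j)⁻¹ * gseq (j - 1)) *
            ω g (h * gseq j) ((gseq j)⁻¹ * gseq (j - 1)) /
          ω (g * h) (gseq j) ((gseq j)⁻¹ * gseq (j - 1)))) =
      ω g h (gseq a) / ω g h (gseq b) :=
  telescoping_cocycle_product_general ω hω a b hab gseq g h
end
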